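/- arXiv:2209.13882 — 2 statements merged into one kernel-verified Lean document; each statement's English description precedes it below -/
import Mathlib

section
/- Let k > 1/2 be a real number, let \ell be a positive even integer, and let P be a real number with |P| > \ell/(20(2k+1)). Then \sum_{r=0}^{\ell} |(2k-1)P|^r/r! \le (24(2k+1)|P|/\ell)^{\ell}. -/
/-!
Write `A = (2k+1)|P|` and `s = ℓ/20`, so that `|(2k-1)P| ≤ A` and `s < A`. Factoring
`A^r = (A/s)^r s^r ≤ (A/s)^ℓ s^r` for `r ≤ ℓ` bounds the truncated exponential series by
`(A/s)^ℓ e^s`, and `e^{1/20} ≤ 20/19 ≤ 6/5` gives `e^s ≤ (6/5)^ℓ`; finally `(20/ℓ)·(6/5) = 24/ℓ`.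
-/

open Finset Real
open scoped Nat

theorem sum_range_pow_div_factorial_le_div_pow_mul_exp {a s : ℝ} (hs : 0 < s) (hsa : s ≤ a)
    (n : ℕ) : ∑ r ∈ range (n + 1), a ^ r / r ! ≤ (a / s) ^ n * exp s := by
  have hratio : 1 ≤ a / s := (one_le_div hs).mpr hsa
  calc ∑ r ∈ range (n + 1), a ^ r / r !
      = ∑ r ∈ range (n + 1), (a / s) ^ r * (s ^ r / r !) := by
        refine sum_congr rfl fun r _ => ?_
        rw [div_pow, div_mul_div_cancel₀ (pow_ne_zero r hs.ne')]
    _ ≤ ∑ r ∈ range (n + 1), (a / s) ^ n * (s ^ r / r !) := by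
        refine sum_le_sum fun r hr => ?_
        gcongr
        exact Nat.lt_succ_iff.mp (mem_range.mp hr)
    _ = (a / s) ^ n * ∑ r ∈ range (n + 1), s ^ r / r ! := (mul_sum _ _ _).symm
    _ ≤ (a / s) ^ n * exp s := by
        gcongr
        exact sum_le_exp_of_nonneg hs.le _

theorem exp_nat_div_twenty_le (n : ℕ) : exp (n / 20) ≤ (6 / 5 : ℝ) ^ n := by
  have h : exp (1 / 20) ≤ 6 / 5 :=
    (exp_bound_div_one_sub_of_interval (by norm_num) (by norm_num)).trans (by norm_num)
  calc exp (n / 20) = exp (1 / 20) ^ n := by rw [← exp_nat_mul]; ring_nf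
    _ ≤ (6 / 5) ^ n := by gcongr

theorem stmt_5_general (k : ℝ) (hk : 1 / 2 < k) (ℓ : ℕ) (hℓ : 0 < ℓ)
    (P : ℝ) (hP : |P| > (ℓ : ℝ) / (20 * (2 * k + 1))) :
    ∑ r ∈ Finset.range (ℓ + 1), |(2 * k - 1) * P| ^ r / (Nat.factorial r) ≤
      (24 * (2 * k + 1) * |P| / ℓ) ^ ℓ := by
  have hs : (0 : ℝ) < ℓ / 20 := by positivity
  have hsA : (ℓ : ℝ) / 20 ≤ (2 * k + 1) * |P| := by
    rw [gt_iff_lt, div_lt_iff₀ (by linarith)] at hP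
    linarith
  have hbase : |(2 * k - 1) * P| ≤ (2 * k + 1) * |P| := by
    rw [abs_mul, abs_of_nonneg (by linarith : 0 ≤ 2 * k - 1)]
    gcongr
    linarith
  calc ∑ r ∈ range (ℓ + 1), |(2 * k - 1) * P| ^ r / r !
      ≤ ∑ r ∈ range (ℓ + 1), ((2 * k + 1) * |P|) ^ r / r ! := by
        gcongr
    _ ≤ ((2 * k + 1) * |P| / (ℓ / 20)) ^ ℓ * exp (ℓ / 20) :=
        sum_range_pow_div_factorial_le_div_pow_mul_exp hs hsA ℓ
    _ ≤ ((2 * k + 1) * |P| / (ℓ / 20)) ^ ℓ * (6 / 5) ^ ℓ := by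
        gcongr
        exact exp_nat_div_twenty_le ℓ
    _ = (24 * (2 * k + 1) * |P| / ℓ) ^ ℓ := by
        rw [← mul_pow]
        congr 1
        field_simp
        ring

theorem stmt_5 (k : ℝ) (hk : 1 / 2 < k) (ℓ : ℕ) (hℓ : 0 < ℓ) (hev : Even ℓ)
    (P : ℝ) (hP : |P| > (ℓ : ℝ) / (20 * (2 * k + 1))) :
    ∑ r ∈ Finset.range (ℓ + 1), |(2 * k - 1) * P| ^ r / (Nat.factorial r) ≤
      (24 * (2 * k + 1) * |P| / ℓ) ^ ℓ :=
  stmt_5_general k hk ℓ hℓ P hP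
end

section
/- Let x \ge 2 be real. Then \sum_{p \le x, p \text{ prime}} \log p / p = \log x + O(1), i.e., there is an absolute constant C with |\sum_{p \le x} (\log p)/p - \log x| \le C for all x \ge 2. -/
/-!
Unique factorization writes `log n!` as `∑_{p ≤ n} v_p(n!) log p`, and Legendre's formula gives
`n/p - 1 ≤ v_p(n!) ≤ n/(p-1)`.
Since `log n! = n log n + O(n)`, dividing by `n` gives `∑_{p ≤ n} log p / p = log n + O(1)`:
the lower bound on `v_p(n!)` loses `θ(n) ≤ n log 4` (Chebyshev), the upper bound loses
`n ∑_p log p / (p (p - 1))`, a convergent series.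
-/

open Nat hiding log
open Finset Real Chebyshev

theorem log_factorial_eq_sum_primesLE (n : ℕ) :
    log (n ! : ℝ) = ∑ p ∈ primesLE n, (padicValNat p n ! : ℝ) * log p := by
  have hsupp : (n !).factorization.support ⊆ primesLE n := by
    intro p hp
    rw [support_factorization] at hp
    have hp' := prime_of_mem_primeFactors hp
    exact mem_primesLE.2 ⟨(hp'.dvd_factorial).1 (dvd_of_mem_primeFactors hp), hp'⟩
  rw [log_nat_eq_sum_factorization, Finsupp.sum_of_support_subset _ hsupp _ (by simp)]
  refine sum_congr rfl fun p hp => ?_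
  rw [factorization_def _ (prime_of_mem_primesLE hp)]

theorem div_sub_one_le_padicValNat_factorial {p : ℕ} (hp : p.Prime) (n : ℕ) :
    (n : ℝ) / p - 1 ≤ padicValNat p n ! := by
  have := Fact.mk hp
  have h : n / p ≤ padicValNat p n ! := by
    rw [← padicValNat_mul_div_factorial, padicValNat_factorial_mul]
    exact Nat.le_add_left _ _
  calc (n : ℝ) / p - 1 ≤ (n / p : ℕ) := by
        rw [← floor_div_eq_div (K := ℝ)]
        exact (sub_one_lt_floor _).le
    _ ≤ padicValNat p n ! := by exact_mod_cast h

theorem padicValNat_factorial_le_div_sub_one {p : ℕ} (hp : p.Prime) (n : ℕ) :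
    (padicValNat p n ! : ℝ) ≤ n / (p - 1) := by
  have := Fact.mk hp
  have h : (p - 1) * padicValNat p n ! ≤ n :=
    (sub_one_mul_padicValNat_factorial n).trans_le (Nat.sub_le _ _)
  have hp1 : (1 : ℝ) < p := by exact_mod_cast hp.one_lt
  rw [le_div_iff₀ (by linarith), mul_comm, ← Nat.cast_pred hp.pos]
  exact_mod_cast h

theorem log_div_mul_sub_one_nonneg (m : ℕ) : 0 ≤ log m / (m * (m - 1 : ℝ)) := by
  rcases m with _ | m
  · simp
  · exact div_nonneg (log_natCast_nonneg _) (by push_cast; rw [add_sub_cancel_right]; positivity)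

theorem log_div_mul_sub_one_le_rpow {m : ℕ} (hm : 2 ≤ m) :
    log m / (m * (m - 1 : ℝ)) ≤ 4 * (m : ℝ) ^ (-(3 / 2) : ℝ) := by
  -- `log m ≤ 2 √m` and `m (m - 1) ≥ m² / 2`
  have hm0 : (0 : ℝ) < m := by positivity
  have hm2 : (2 : ℝ) ≤ m := by exact_mod_cast hm
  have hsqrt : 0 ≤ (m : ℝ) ^ (1 / 2 : ℝ) := by positivity
  have hlog : log m ≤ (m : ℝ) ^ (1 / 2 : ℝ) / (1 / 2) := log_le_rpow_div hm0.le (by norm_num)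
  have hrpow : (m : ℝ) ^ (-(3 / 2) : ℝ) = (m : ℝ) ^ (1 / 2 : ℝ) / m ^ 2 := by
    rw [show (-(3 / 2) : ℝ) = 1 / 2 - (2 : ℕ) by norm_num, rpow_sub hm0, rpow_natCast]
  rw [hrpow, div_le_iff₀ (by nlinarith)]
  calc log m ≤ 2 * (m : ℝ) ^ (1 / 2 : ℝ) := by linarith
    _ ≤ 4 * ((m : ℝ) ^ (1 / 2 : ℝ) / m ^ 2) * (m * (m - 1)) := by
      rw [mul_div_assoc', div_mul_eq_mul_div, le_div_iff₀ (by positivity)]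
      nlinarith [mul_nonneg hsqrt (sub_nonneg.2 hm2)]

theorem summable_log_div_mul_sub_one : Summable fun m : ℕ => log m / (m * (m - 1 : ℝ)) := by
  refine .of_nonneg_of_le log_div_mul_sub_one_nonneg (fun m => ?_)
    ((summable_nat_rpow.2 (by norm_num : -(3 / 2 : ℝ) < -1)).mul_left 4)
  rcases lt_or_ge m 2 with hm | hm
  · interval_cases m <;> simp
  · exact log_div_mul_sub_one_le_rpow hm

theorem mul_sum_log_div_sub_theta_le_log_factorial (n : ℕ) :
    n * ∑ p ∈ primesLE n, log p / p - θ n ≤ log (n ! : ℝ) := by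
  rw [theta_eq_sum_primesLE_log, log_factorial_eq_sum_primesLE, mul_sum, ← sum_sub_distrib]
  gcongr with p hp
  calc n * (log p / p) - log p = (n / p - 1) * log p := by ring
    _ ≤ _ := mul_le_mul_of_nonneg_right
      (div_sub_one_le_padicValNat_factorial (prime_of_mem_primesLE hp) n) (log_natCast_nonneg p)

theorem log_factorial_le_mul_sum_log_div_add_tsum (n : ℕ) :
    log (n ! : ℝ) ≤ n * (∑ p ∈ primesLE n, log p / p + ∑' m : ℕ, log m / (m * (m - 1 : ℝ))) := by
  have htail : ∑ p ∈ primesLE n, log p / (p * (p - 1 : ℝ)) ≤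
      ∑' m : ℕ, log m / (m * (m - 1 : ℝ)) :=
    summable_log_div_mul_sub_one.sum_le_tsum _ fun m _ => log_div_mul_sub_one_nonneg m
  calc log (n ! : ℝ) = ∑ p ∈ primesLE n, (padicValNat p n ! : ℝ) * log p :=
        log_factorial_eq_sum_primesLE n
    _ ≤ ∑ p ∈ primesLE n, n * (log p / p + log p / (p * (p - 1 : ℝ))) := by
      refine sum_le_sum fun p hp => ?_
      have hp := prime_of_mem_primesLE hp
      have hp1 : (1 : ℝ) < p := by exact_mod_cast hp.one_lt
      calc (padicValNat p n ! : ℝ) * log p ≤ n / (p - 1) * log p :=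
            mul_le_mul_of_nonneg_right (padicValNat_factorial_le_div_sub_one hp n)
              (log_natCast_nonneg p)
        _ = n * (log p / p + log p / (p * (p - 1))) := by
          field_simp [(by linarith : (p : ℝ) - 1 ≠ 0)]
          ring
    _ = n * (∑ p ∈ primesLE n, log p / p + ∑ p ∈ primesLE n, log p / (p * (p - 1 : ℝ))) := by
      rw [← mul_sum, sum_add_distrib]
    _ ≤ _ := by gcongr

theorem sum_primesLE_log_div_sub_log_le (n : ℕ) :
    ∑ p ∈ primesLE n, log p / p - log n ≤ log 4 := by
  rcases n.eq_zero_or_pos with rfl | hn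
  · simpa using log_nonneg (by norm_num : (1 : ℝ) ≤ 4)
  have hn' : (0 : ℝ) < n := by exact_mod_cast hn
  have hfact : log (n ! : ℝ) ≤ n * log n := by
    rw [← Real.log_pow]
    exact log_le_log (by positivity) (by exact_mod_cast factorial_le_pow n)
  have hlegendre := mul_sum_log_div_sub_theta_le_log_factorial n
  have hchebyshev := theta_le_log4_mul_x (Nat.cast_nonneg n)
  rw [← mul_le_mul_iff_right₀ hn', mul_sub]
  linarith

theorem log_sub_sum_primesLE_log_div_le {n : ℕ} (hn : 0 < n) :
    log n - ∑ p ∈ primesLE n, log p / p ≤ 1 + ∑' m : ℕ, log m / (m * (m - 1 : ℝ)) := by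
  have hn' : (0 : ℝ) < n := by exact_mod_cast hn
  have hstirling := Stirling.le_log_factorial_stirling hn.ne'
  have hlegendre := log_factorial_le_mul_sum_log_div_add_tsum n
  have hlog_n := log_natCast_nonneg n
  have hlog_two_pi : 0 ≤ log (2 * π) := log_nonneg (by linarith [pi_gt_three])
  rw [← mul_le_mul_iff_right₀ hn', mul_sub]
  linarith

theorem log_le_log_floor_add_log_two {x : ℝ} (hx : 1 ≤ x) : log x ≤ log ⌊x⌋₊ + log 2 := by
  have hfloor : (1 : ℝ) ≤ ⌊x⌋₊ := by exact_mod_cast (one_le_floor_iff x).2 hx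
  rw [← log_mul (by positivity) two_ne_zero]
  exact log_le_log (by linarith) (by linarith [lt_floor_add_one x])

theorem stmt_17 :
    ∃ C : ℝ, ∀ x : ℝ, 2 ≤ x →
      |(∑ p ∈ Finset.filter Nat.Prime (Finset.range (Nat.floor x + 1)),
          Real.log p / p) - Real.log x| ≤ C := by
  refine ⟨log 4 + 1 + ∑' m : ℕ, log m / (m * (m - 1 : ℝ)), fun x hx => ?_⟩
  have hn : 0 < ⌊x⌋₊ := floor_pos.2 (by linarith)
  have hupper := sum_primesLE_log_div_sub_log_le ⌊x⌋₊
  have hlower := log_sub_sum_primesLE_log_div_le hn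
  have hfloor_le := log_le_log (by exact_mod_cast hn) (floor_le (by linarith : 0 ≤ x))
  have hle_floor := log_le_log_floor_add_log_two (by linarith : 1 ≤ x)
  have hlog_two := log_le_log two_pos (by norm_num : (2 : ℝ) ≤ 4)
  have htail : 0 ≤ ∑' m : ℕ, log m / (m * (m - 1 : ℝ)) := tsum_nonneg log_div_mul_sub_one_nonneg
  rw [← primesLE_eq_filter_range, abs_sub_le_iff]
  constructor <;> linarith
end
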